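/- arXiv:1404.5779 — 2 statements merged into one kernel-verified Lean document; each statement's English description precedes it below -/
import Mathlib

section
/- Let n ≥ 1 and β > 0. There exists C > 0 such that for all t > 0 and z ∈ ℝⁿ, |t^β ∂_t^β P_t(z)| ≤ C t^β / (t + |z|)^{n+β}, where ∂_t^β is the fractional derivative in the variable t applied to the Poisson kernel P_t(z) with z fixed. -/
open MeasureTheory Real Set

/-- For `β > 0`, the unique `m ∈ ℕ` with `m - 1 ≤ β < m`. -/
noncomputable def fracOrder (β : ℝ) : ℕ := ⌊β⌋.toNat + 1

/-- The `β`-th fractional derivative in `t` (à la Segovia–Wheeden):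
`∂_t^β F(t) = (e^{−iπ(m−β)}/Γ(m−β)) ∫₀^∞ ∂_t^m F(t+s) s^{m−β−1} ds` with `m - 1 ≤ β < m`. -/
noncomputable def fracDeriv (β : ℝ) (F : ℝ → ℂ) (t : ℝ) : ℂ :=
  (Complex.exp (-(Complex.I * (Real.pi : ℂ) * ((fracOrder β : ℂ) - (β : ℂ)))) /
      Complex.Gamma ((fracOrder β : ℂ) - (β : ℂ))) *
    ∫ s in Set.Ioi (0 : ℝ), iteratedDeriv (fracOrder β) F (t + s) *
      ((s ^ ((fracOrder β : ℝ) - β - 1) : ℝ) : ℂ)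

/-- The classical Poisson kernel `P_t(z) = c_n t/(|z|² + t²)^((n+1)/2)`,
`c_n = Γ((n+1)/2)/π^((n+1)/2)`. -/
noncomputable def poissonKernelRn (n : ℕ) (t : ℝ) (z : EuclideanSpace ℝ (Fin n)) : ℝ :=
  (Real.Gamma ((n + 1 : ℝ) / 2) / Real.pi ^ ((n + 1 : ℝ) / 2)) *
    (t / (‖z‖ ^ 2 + t ^ 2) ^ ((n + 1 : ℝ) / 2))

/-!
With `r = |z|` and `σ = (n+1)/2`, the Poisson kernel is `c τ (r² + τ²)^(-σ)`. Each `τ`-derivative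
of a term `c τ^i (r² + τ²)^(-σ-k)` is a sum of two such terms, with `i - 2k` lowered by one, so
`∂_τ^m P_τ(z)` is a sum of terms homogeneous of degree `1 - m - 2σ = -(n + m)` in `(r, τ)`, whence
`|∂_τ^m P_τ(z)| ≤ C (τ + r)^(-(n+m))`. In the integral defining `∂_t^β` the substitution
`s = (t + r) u` then gives `(t + r)^(-(n+β))` times the convergent integral
`∫₀^∞ (1 + u)^(-(n+m)) u^(m-β-1) du`.
-/

lemma hasDerivAt_sq_add_sq_rpow (r e : ℝ) {τ : ℝ} (hτ : 0 < τ) :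
    HasDerivAt (fun τ => (r ^ 2 + τ ^ 2) ^ e) (2 * e * τ * (r ^ 2 + τ ^ 2) ^ (e - 1)) τ := by
  convert ((hasDerivAt_pow 2 τ).const_add (r ^ 2)).rpow_const (p := e)
    (Or.inl (by positivity)) using 1
  push_cast
  ring

lemma pow_mul_sq_add_sq_rpow_neg_le {r τ s : ℝ} (hr : 0 ≤ r) (hτ : 0 < τ) (hs : 0 ≤ s) (i : ℕ) :
    τ ^ i * (r ^ 2 + τ ^ 2) ^ (-s) ≤ 2 ^ s * (τ + r) ^ ((i : ℝ) - 2 * s) := by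
  have hτr : 0 < τ + r := by positivity
  have hsq : (τ + r) ^ 2 ≤ 2 * (r ^ 2 + τ ^ 2) := by nlinarith [sq_nonneg (τ - r)]
  have hpow : ((τ + r) ^ 2) ^ s ≤ 2 ^ s * (r ^ 2 + τ ^ 2) ^ s := by
    rw [← mul_rpow (by norm_num) (by positivity)]
    exact rpow_le_rpow (by positivity) hsq hs
  have hsplit : (τ + r) ^ ((i : ℝ) - 2 * s) = (τ + r) ^ i / ((τ + r) ^ 2) ^ s := by
    rw [rpow_sub hτr, rpow_natCast, rpow_mul hτr.le, rpow_two]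
  rw [hsplit, rpow_neg (by positivity), ← div_eq_mul_inv, mul_div_assoc',
    le_div_iff₀ (by positivity), div_mul_eq_mul_div, div_le_iff₀ (by positivity)]
  calc τ ^ i * ((τ + r) ^ 2) ^ s ≤ (τ + r) ^ i * (2 ^ s * (r ^ 2 + τ ^ 2) ^ s) := by
        gcongr; linarith
    _ = 2 ^ s * (τ + r) ^ i * (r ^ 2 + τ ^ 2) ^ s := by ring

lemma hasDerivAt_pow_mul_sq_add_sq_rpow (c σ r : ℝ) (i k : ℕ) {τ : ℝ} (hτ : 0 < τ) :
    HasDerivAt (fun τ => c * τ ^ i * (r ^ 2 + τ ^ 2) ^ (-σ - k))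
      (c * i * τ ^ (i - 1) * (r ^ 2 + τ ^ 2) ^ (-σ - k) +
        2 * c * (-σ - k) * τ ^ (i + 1) * (r ^ 2 + τ ^ 2) ^ (-σ - (k + 1 : ℕ))) τ := by
  refine (((hasDerivAt_pow i τ).const_mul c).fun_mul
    (hasDerivAt_sq_add_sq_rpow r (-σ - k) hτ)).congr_deriv ?_
  rw [Nat.cast_succ, ← sub_sub, pow_succ]
  ring

/-- Finite sums of terms homogeneous of degree `p - 2σ` in `(r, τ)`. -/
inductive IsHomogeneousKernel (σ : ℝ) : ℤ → (ℝ → ℝ → ℝ) → Prop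
  | monomial (c : ℝ) {p : ℤ} (i k : ℕ) (hp : p = i - 2 * k) :
      IsHomogeneousKernel σ p fun r τ => c * τ ^ i * (r ^ 2 + τ ^ 2) ^ (-σ - k)
  | add {p : ℤ} {F G : ℝ → ℝ → ℝ} :
      IsHomogeneousKernel σ p F → IsHomogeneousKernel σ p G → IsHomogeneousKernel σ p (F + G)

namespace IsHomogeneousKernel

variable {σ : ℝ} {p : ℤ} {F : ℝ → ℝ → ℝ}

theorem exists_hasDerivAt (h : IsHomogeneousKernel σ p F) :
    ∃ G, IsHomogeneousKernel σ (p - 1) G ∧ ∀ r τ, 0 < τ → HasDerivAt (F r) (G r τ) τ := by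
  induction h with
  | monomial c i k hp =>
    cases i with
    | zero =>
      refine ⟨_, monomial (2 * c * (-σ - k)) 1 (k + 1) (by omega), fun r τ hτ => ?_⟩
      convert hasDerivAt_pow_mul_sq_add_sq_rpow c σ r 0 k hτ using 1
      simp
    | succ j =>
      refine ⟨_, (monomial (c * (j + 1)) j k (by omega)).add
        (monomial (2 * c * (-σ - k)) (j + 2) (k + 1) (by omega)), fun r τ hτ => ?_⟩
      convert hasDerivAt_pow_mul_sq_add_sq_rpow c σ r (j + 1) k hτ using 1
      simp only [Pi.add_apply]
      push_cast
      ring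
  | add _ _ ihF ihG =>
    obtain ⟨F', hF', hF'deriv⟩ := ihF
    obtain ⟨G', hG', hG'deriv⟩ := ihG
    exact ⟨F' + G', hF'.add hG', fun r τ hτ => (hF'deriv r τ hτ).add (hG'deriv r τ hτ)⟩

theorem exists_iteratedDeriv_eq (h : IsHomogeneousKernel σ p F) (m : ℕ) :
    ∃ G, IsHomogeneousKernel σ (p - m) G ∧
      ∀ r τ, 0 < τ → iteratedDeriv m (fun τ => (F r τ : ℂ)) τ = G r τ := by
  induction m with
  | zero => exact ⟨F, by simpa using h, fun r τ _ => by simp⟩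
  | succ m ih =>
    obtain ⟨G, hG, hGeq⟩ := ih
    obtain ⟨G', hG', hG'deriv⟩ := hG.exists_hasDerivAt
    refine ⟨G', by convert hG' using 1; push_cast; ring, fun r τ hτ => ?_⟩
    have hloc : iteratedDeriv m (fun τ => (F r τ : ℂ)) =ᶠ[nhds τ] fun x => (G r x : ℂ) :=
      Filter.eventually_of_mem (Ioi_mem_nhds hτ) fun x hx => hGeq r x hx
    rw [iteratedDeriv_succ, hloc.deriv_eq, (hG'deriv r τ hτ).ofReal_comp.deriv]

theorem exists_abs_le (hσ : 0 ≤ σ) (h : IsHomogeneousKernel σ p F) :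
    ∃ C, ∀ r τ, 0 ≤ r → 0 < τ → |F r τ| ≤ C * (τ + r) ^ ((p : ℝ) - 2 * σ) := by
  induction h with
  | monomial c i k hp =>
    subst hp
    refine ⟨|c| * 2 ^ (σ + k), fun r τ hr hτ => ?_⟩
    have hexp : ((i - 2 * k : ℤ) : ℝ) - 2 * σ = i - 2 * (σ + k) := by push_cast; ring
    dsimp only
    rw [hexp, abs_mul, abs_mul, abs_of_pos (by positivity : 0 < τ ^ i),
      abs_of_pos (by positivity : 0 < (r ^ 2 + τ ^ 2) ^ (-σ - k)), mul_assoc, mul_assoc,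
      ← neg_add']
    exact mul_le_mul_of_nonneg_left
      (pow_mul_sq_add_sq_rpow_neg_le hr hτ (by positivity) i) (abs_nonneg c)
  | add _ _ ihF ihG =>
    obtain ⟨C₁, hC₁⟩ := ihF
    obtain ⟨C₂, hC₂⟩ := ihG
    refine ⟨C₁ + C₂, fun r τ hr hτ => ?_⟩
    rw [Pi.add_apply, add_mul]
    exact (abs_add_le _ _).trans (add_le_add (hC₁ r τ hr hτ) (hC₂ r τ hr hτ))

theorem exists_norm_iteratedDeriv_le (hσ : 0 ≤ σ) (h : IsHomogeneousKernel σ p F) (m : ℕ) :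
    ∃ C, ∀ r τ, 0 ≤ r → 0 < τ →
      ‖iteratedDeriv m (fun τ => (F r τ : ℂ)) τ‖ ≤ C * (τ + r) ^ ((p : ℝ) - m - 2 * σ) := by
  obtain ⟨G, hG, hGeq⟩ := h.exists_iteratedDeriv_eq m
  obtain ⟨C, hC⟩ := hG.exists_abs_le hσ
  refine ⟨C, fun r τ hr hτ => ?_⟩
  rw [hGeq r τ hτ, Complex.norm_real, norm_eq_abs]
  simpa using hC r τ hr hτ

end IsHomogeneousKernel

lemma integrableOn_one_add_rpow_mul_rpow {q γ : ℝ} (hγ : -1 < γ) (hq : γ + 1 < q) :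
    IntegrableOn (fun u => (1 + u) ^ (-q) * u ^ γ) (Ioi (0 : ℝ)) := by
  have hcont : ContinuousOn (fun u : ℝ => (1 + u) ^ (-q) * u ^ γ) (Ioi (0 : ℝ)) := by
    refine ContinuousOn.mul ?_ ?_
    · exact (continuousOn_const.add continuousOn_id).rpow_const
        fun u hu => Or.inl (add_pos one_pos hu).ne'
    · exact continuousOn_id.rpow_const fun u hu => Or.inl (ne_of_gt hu)
  rw [← Ioc_union_Ioi_eq_Ioi zero_le_one]
  refine IntegrableOn.union ?_ ?_
  · refine ((intervalIntegral.intervalIntegrable_rpow' hγ).1).mono' ?_ ?_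
    · exact (hcont.mono Ioc_subset_Ioi_self).aestronglyMeasurable measurableSet_Ioc
    · refine ae_restrict_of_forall_mem measurableSet_Ioc fun u hu => ?_
      rw [norm_of_nonneg (by have := hu.1; positivity)]
      refine mul_le_of_le_one_left (rpow_nonneg hu.1.le γ) ?_
      exact rpow_le_one_of_one_le_of_nonpos (by linarith [hu.1]) (by linarith)
  · refine (integrableOn_Ioi_rpow_of_lt (by linarith : γ - q < -1) zero_lt_one).mono' ?_ ?_
    · exact (hcont.mono (Ioi_subset_Ioi zero_le_one)).aestronglyMeasurable measurableSet_Ioi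
    · refine ae_restrict_of_forall_mem measurableSet_Ioi fun u (hu : 1 < u) => ?_
      have hu0 : 0 < u := by linarith
      rw [norm_of_nonneg (by positivity), sub_eq_neg_add, rpow_add hu0]
      exact mul_le_mul_of_nonneg_right
        (rpow_le_rpow_of_nonpos hu0 (by linarith) (by linarith)) (rpow_nonneg hu0.le γ)

lemma add_rpow_mul_rpow_comp_mul_left {b u : ℝ} (q γ : ℝ) (hb : 0 < b) (hu : 0 < u) :
    (b + b * u) ^ (-q) * (b * u) ^ γ = b ^ (γ - q) * ((1 + u) ^ (-q) * u ^ γ) := by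
  rw [← mul_one_add, mul_rpow hb.le (by positivity), mul_rpow hb.le hu.le, sub_eq_neg_add,
    rpow_add hb]
  ring

lemma integrableOn_add_rpow_mul_rpow {b q γ : ℝ} (hb : 0 < b) (hγ : -1 < γ) (hq : γ + 1 < q) :
    IntegrableOn (fun s => (b + s) ^ (-q) * s ^ γ) (Ioi (0 : ℝ)) := by
  rw [← mul_zero b, ← integrableOn_Ioi_comp_mul_left_iff _ _ hb]
  exact IntegrableOn.congr_fun ((integrableOn_one_add_rpow_mul_rpow hγ hq).const_mul _)
    (fun u hu => (add_rpow_mul_rpow_comp_mul_left q γ hb hu).symm) measurableSet_Ioi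

lemma integral_add_rpow_mul_rpow {b : ℝ} (q γ : ℝ) (hb : 0 < b) :
    ∫ s in Ioi (0 : ℝ), (b + s) ^ (-q) * s ^ γ =
      b ^ (γ - q + 1) * ∫ u in Ioi (0 : ℝ), (1 + u) ^ (-q) * u ^ γ := by
  have hscale := integral_comp_mul_left_Ioi (fun s => (b + s) ^ (-q) * s ^ γ) 0 hb
  rw [mul_zero, setIntegral_congr_fun measurableSet_Ioi
    (fun u hu => add_rpow_mul_rpow_comp_mul_left q γ hb hu), integral_const_mul, smul_eq_mul,
    eq_inv_mul_iff_mul_eq₀ hb.ne'] at hscale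
  rw [← hscale, rpow_add_one hb.ne']
  ring

lemma lt_fracOrder (β : ℝ) : β < fracOrder β := by
  have hfloor : (⌊β⌋ : ℝ) ≤ (⌊β⌋.toNat : ℝ) := by exact_mod_cast Int.self_le_toNat ⌊β⌋
  rw [fracOrder, Nat.cast_succ]
  linarith [Int.lt_floor_add_one β]

theorem exists_norm_fracDeriv_le {β q : ℝ} (hq : fracOrder β - β < q) :
    ∃ C, ∀ (F : ℝ → ℂ) (D r t : ℝ), 0 ≤ r → 0 < t →
      (∀ τ, 0 < τ → ‖iteratedDeriv (fracOrder β) F τ‖ ≤ D * (τ + r) ^ (-q)) →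
        ‖fracDeriv β F t‖ ≤ C * D * (t + r) ^ ((fracOrder β : ℝ) - β - q) := by
  set γ : ℝ := (fracOrder β : ℝ) - β - 1
  have hγ : -1 < γ := by linarith [lt_fracOrder β]
  have hγq : γ + 1 < q := by linarith
  refine ⟨‖Complex.exp (-(Complex.I * π * ((fracOrder β : ℂ) - β))) /
      Complex.Gamma ((fracOrder β : ℂ) - β)‖ * ∫ u in Ioi (0 : ℝ), (1 + u) ^ (-q) * u ^ γ,
    fun F D r t hr ht hF => ?_⟩
  have hb : 0 < t + r := by positivity
  have hpointwise : ∀ s ∈ Ioi (0 : ℝ),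
      ‖iteratedDeriv (fracOrder β) F (t + s) * ((s ^ γ : ℝ) : ℂ)‖ ≤
        D * ((t + r + s) ^ (-q) * s ^ γ) := by
    intro s (hs : 0 < s)
    rw [norm_mul, Complex.norm_real, norm_of_nonneg (rpow_nonneg hs.le γ), ← mul_assoc,
      add_right_comm]
    exact mul_le_mul_of_nonneg_right (hF (t + s) (by positivity)) (rpow_nonneg hs.le γ)
  have hintegral : ‖∫ s in Ioi (0 : ℝ), iteratedDeriv (fracOrder β) F (t + s) * ((s ^ γ : ℝ) : ℂ)‖
      ≤ D * ((t + r) ^ (γ - q + 1) * ∫ u in Ioi (0 : ℝ), (1 + u) ^ (-q) * u ^ γ) :=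
    calc _ ≤ ∫ s in Ioi (0 : ℝ), ‖iteratedDeriv (fracOrder β) F (t + s) * ((s ^ γ : ℝ) : ℂ)‖ :=
          norm_integral_le_integral_norm _
      _ ≤ ∫ s in Ioi (0 : ℝ), D * ((t + r + s) ^ (-q) * s ^ γ) :=
          integral_mono_of_nonneg (Filter.Eventually.of_forall fun _ => norm_nonneg _)
            ((integrableOn_add_rpow_mul_rpow hb hγ hγq).const_mul D)
            (ae_restrict_of_forall_mem measurableSet_Ioi hpointwise)
      _ = _ := by rw [integral_const_mul, integral_add_rpow_mul_rpow q γ hb]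
  rw [fracDeriv, norm_mul]
  calc _ ≤ _ := mul_le_mul_of_nonneg_left hintegral (norm_nonneg _)
    _ = _ := by rw [show γ - q + 1 = (fracOrder β : ℝ) - β - q by ring]; ring

theorem isHomogeneousKernel_poissonKernelRn (n : ℕ) :
    ∃ F, IsHomogeneousKernel ((n + 1) / 2) 1 F ∧ ∀ τ z, poissonKernelRn n τ z = F ‖z‖ τ :=
  ⟨_, .monomial (Real.Gamma ((n + 1) / 2) / π ^ ((n + 1 : ℝ) / 2)) 1 0 rfl, fun τ z => by
    simp [poissonKernelRn, rpow_neg (by positivity : (0 : ℝ) ≤ ‖z‖ ^ 2 + τ ^ 2), div_eq_mul_inv,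
      mul_assoc]⟩

theorem statement1_general (n : ℕ) (β : ℝ) (hβ : 0 < β) :
    ∃ C > (0 : ℝ), ∀ t : ℝ, 0 < t → ∀ z : EuclideanSpace ℝ (Fin n),
      ‖(((t ^ β : ℝ) : ℂ) * fracDeriv β (fun τ => (poissonKernelRn n τ z : ℂ)) t)‖
        ≤ C * t ^ β / (t + ‖z‖) ^ ((n : ℝ) + β) := by
  obtain ⟨P, hP, hPoisson⟩ := isHomogeneousKernel_poissonKernelRn n
  obtain ⟨D, hD⟩ := hP.exists_norm_iteratedDeriv_le (by positivity) (fracOrder β)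
  obtain ⟨C, hC⟩ := exists_norm_fracDeriv_le (β := β) (q := n + fracOrder β) (by linarith)
  refine ⟨max (C * D) 1, by positivity, fun t ht z => ?_⟩
  have hb : 0 < t + ‖z‖ := by positivity
  have hfrac := hC (fun τ => (P ‖z‖ τ : ℂ)) D ‖z‖ t (norm_nonneg z) ht fun τ hτ => by
    convert hD ‖z‖ τ (norm_nonneg z) hτ using 3
    ring
  simp_rw [hPoisson]
  rw [norm_mul, Complex.norm_real, norm_of_nonneg (by positivity)]
  calc t ^ β * ‖fracDeriv β (fun τ => (P ‖z‖ τ : ℂ)) t‖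
      ≤ t ^ β * (C * D * (t + ‖z‖) ^ (-((n : ℝ) + β))) := by
        refine mul_le_mul_of_nonneg_left (hfrac.trans_eq ?_) (by positivity)
        congr 2
        ring
    _ = C * D * t ^ β / (t + ‖z‖) ^ ((n : ℝ) + β) := by
        rw [rpow_neg hb.le]
        ring
    _ ≤ max (C * D) 1 * t ^ β / (t + ‖z‖) ^ ((n : ℝ) + β) := by
        gcongr
        exact le_max_left _ _

/-- `|t^β ∂_t^β P_t(z)| ≤ C t^β / (t + |z|)^{n+β}` for all `t > 0`, `z ∈ ℝⁿ`. -/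
theorem statement1 (n : ℕ) (hn : 1 ≤ n) (β : ℝ) (hβ : 0 < β) :
    ∃ C > (0 : ℝ), ∀ t : ℝ, 0 < t → ∀ z : EuclideanSpace ℝ (Fin n),
      ‖(((t ^ β : ℝ) : ℂ) * fracDeriv β (fun τ => (poissonKernelRn n τ z : ℂ)) t)‖
        ≤ C * t ^ β / (t + ‖z‖) ^ ((n : ℝ) + β) :=
  statement1_general n β hβ
end

section
/- Let β > 0 and let P_t(u) = (1/π) t/(t² + u²) be the one-dimensional classical Poisson kernel. There exists C > 0 such that for all x, z ∈ (0,∞), ( ∫_{Γ₊(x)} |t^β ∂_t^β P_t(y+z)|² dy dt / t² )^{1/2} ≤ C/(x+z), and for all x, z ∈ (0,∞) with x ≠ z, ( ∫_{Γ₊(x)} |t^β ∂_t^β P_t(y−z)|² dy dt / t² )^{1/2} ≤ C/|x−z|, where ∂_t^β acts in the variable t. -/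
/-!
Writing `P_τ(u) = (2π)⁻¹ ((τ + iu)⁻¹ + (τ - iu)⁻¹)` gives `∂_τ^m P_τ(u)` in closed form, and
`|∂_τ^m P_τ(u)| ≲ (τ + |u|)^{-m-1}`. Since `(b + s)^{-m-1} s^{m-β-1} ≤ s^{m-β-1} max(b, s)^{-m-1}`
integrates to `≲ b^{-β-1}`, this yields `|∂_t^β P_t(u)| ≲ (t + |u|)^{-β-1}`.
On the cone `|x - y| < t` we have `t + |y + z| ≥ x + z` and `t + |y - z| ≥ |x - z|`; with `a` that
distance, the integrand is `≲ t^{2β-2} max(a, t)^{-2β-2}` on a `y`-interval of length `2t`, and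
`∫₀^∞ t^{2β-1} max(a, t)^{-2β-2} dt ≲ a⁻²`.
-/

open MeasureTheory Real Set

/-- The one-dimensional classical Poisson kernel `P_t(u) = (1/π) t/(t²+u²)`. -/
noncomputable def poissonKernel1 (t u : ℝ) : ℝ := (1 / Real.pi) * (t / (t ^ 2 + u ^ 2))

section RpowMaxIntegral

variable {b γ δ : ℝ}

lemma integrableOn_rpow_mul_max_rpow (hb : 0 < b) (hγ : -1 < γ) (hγδ : γ + 1 < δ) :
    IntegrableOn (fun s => s ^ γ * max b s ^ (-δ)) (Ioi 0) := by
  rw [← Ioc_union_Ioi_eq_Ioi hb.le]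
  refine IntegrableOn.union ?_ ?_
  · refine IntegrableOn.congr_fun (f := fun s => s ^ γ * b ^ (-δ)) ?_
      (fun s hs => by simp [max_eq_left hs.2]) measurableSet_Ioc
    refine Integrable.mul_const ?_ _
    exact (intervalIntegrable_iff_integrableOn_Ioc_of_le hb.le).1
      (intervalIntegral.intervalIntegrable_rpow' hγ)
  · refine IntegrableOn.congr_fun (integrableOn_Ioi_rpow_of_lt (a := γ - δ) (by linarith) hb)
      (fun s hs => ?_) measurableSet_Ioi
    rw [max_eq_right (le_of_lt hs), ← Real.rpow_add (hb.trans hs), sub_eq_add_neg]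

lemma integral_rpow_mul_max_rpow (hb : 0 < b) (hγ : -1 < γ) (hγδ : γ + 1 < δ) :
    ∫ s in Ioi 0, s ^ γ * max b s ^ (-δ) = (1 / (γ + 1) + 1 / (δ - γ - 1)) * b ^ (γ + 1 - δ) := by
  have hint := integrableOn_rpow_mul_max_rpow hb hγ hγδ
  rw [← Ioc_union_Ioi_eq_Ioi hb.le, setIntegral_union Ioc_disjoint_Ioi_same measurableSet_Ioi
    (hint.mono_set Ioc_subset_Ioi_self) (hint.mono_set (Ioi_subset_Ioi hb.le))]
  have hnear : ∫ s in Ioc 0 b, s ^ γ * max b s ^ (-δ) = b ^ (γ + 1) / (γ + 1) * b ^ (-δ) := by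
    rw [setIntegral_congr_fun measurableSet_Ioc (g := fun s => s ^ γ * b ^ (-δ))
      (fun s hs => by simp [max_eq_left hs.2]), integral_mul_const,
      ← intervalIntegral.integral_of_le hb.le, integral_rpow (Or.inl hγ),
      Real.zero_rpow (by linarith), sub_zero]
  have hfar : ∫ s in Ioi b, s ^ γ * max b s ^ (-δ) = b ^ (γ + 1 - δ) / (δ - γ - 1) := by
    rw [setIntegral_congr_fun measurableSet_Ioi (g := fun s => s ^ (γ - δ)) (fun s hs => by
      rw [max_eq_right (le_of_lt hs), ← Real.rpow_add (hb.trans hs), sub_eq_add_neg]),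
      integral_Ioi_rpow_of_lt (by linarith) hb]
    rw [show γ - δ + 1 = γ + 1 - δ by ring, show δ - γ - 1 = -(γ + 1 - δ) by ring, div_neg,
      neg_div]
  rw [hnear, hfar, div_mul_eq_mul_div, ← Real.rpow_add hb, ← sub_eq_add_neg]
  ring

end RpowMaxIntegral

section PoissonDerivatives

open Complex

lemma ofReal_add_mul_I_ne_zero (c : ℝ) {τ : ℝ} (hτ : τ ≠ 0) : (τ : ℂ) + c * I ≠ 0 :=
  fun h => hτ (by simpa using congrArg re h)

lemma hasDerivAt_ofReal_add_mul_I_zpow (c : ℝ) (k : ℤ) {τ : ℝ} (hτ : τ ≠ 0) :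
    HasDerivAt (fun σ : ℝ => ((σ : ℂ) + c * I) ^ k) (k * ((τ : ℂ) + c * I) ^ (k - 1)) τ := by
  have h := (hasDerivAt_zpow k _ (Or.inl (ofReal_add_mul_I_ne_zero c hτ))).comp (τ : ℂ)
    ((hasDerivAt_id (τ : ℂ)).add_const (c * I))
  simpa using h.comp_ofReal

lemma norm_ofReal_add_mul_I_zpow_le (c : ℝ) (n : ℕ) {τ : ℝ} (hτ : 0 < τ) :
    ‖((τ : ℂ) + c * I) ^ (-((n : ℤ) + 1))‖ ≤ 2 ^ (n + 1) * (τ + |c|) ^ (-((n : ℝ) + 1)) := by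
  have hlow : (τ + |c|) / 2 ≤ ‖(τ : ℂ) + c * I‖ := by
    rw [norm_add_mul_I, Real.le_sqrt (by positivity) (by positivity)]
    nlinarith [sq_abs c, sq_nonneg (τ - |c|)]
  have hpos : 0 < (τ + |c|) / 2 := by positivity
  calc ‖((τ : ℂ) + c * I) ^ (-((n : ℤ) + 1))‖
      = ‖(τ : ℂ) + c * I‖ ^ (-((n : ℝ) + 1)) := by
        rw [norm_zpow, ← Real.rpow_intCast]; push_cast; rfl
    _ ≤ ((τ + |c|) / 2) ^ (-((n : ℝ) + 1)) :=
        Real.rpow_le_rpow_of_nonpos hpos hlow (by linarith [n.cast_nonneg (α := ℝ)])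
    _ = 2 ^ (n + 1) * (τ + |c|) ^ (-((n : ℝ) + 1)) := by
        rw [Real.div_rpow (by positivity) zero_le_two, Real.rpow_neg zero_le_two,
          ← Nat.cast_succ, Real.rpow_natCast, div_inv_eq_mul, mul_comm]

/-- The closed form of `∂_τⁿ P_τ(u)`, obtained from
`P_τ(u) = (2π)⁻¹ ((τ + iu)⁻¹ + (τ - iu)⁻¹)`. -/
noncomputable def poissonDeriv (u : ℝ) (n : ℕ) (τ : ℝ) : ℂ :=
  (-1) ^ n * n.factorial / (2 * π) *
    (((τ : ℂ) + u * I) ^ (-((n : ℤ) + 1)) + ((τ : ℂ) + ((-u : ℝ) : ℂ) * I) ^ (-((n : ℤ) + 1)))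

lemma ofReal_poissonKernel1 (u : ℝ) {τ : ℝ} (hτ : τ ≠ 0) :
    (poissonKernel1 τ u : ℂ) = poissonDeriv u 0 τ := by
  have h₁ := ofReal_add_mul_I_ne_zero u hτ
  have h₂ : (τ : ℂ) - u * I ≠ 0 := by
    simpa [sub_eq_add_neg] using ofReal_add_mul_I_ne_zero (-u) hτ
  have hden : (τ : ℂ) ^ 2 + (u : ℂ) ^ 2 ≠ 0 := by exact_mod_cast (by positivity : τ ^ 2 + u ^ 2 ≠ 0)
  simp only [poissonKernel1, poissonDeriv, pow_zero, Nat.factorial_zero, Nat.cast_zero,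
    Nat.cast_one, zero_add, zpow_neg, zpow_one]
  push_cast
  rw [neg_mul, ← sub_eq_add_neg]
  field_simp
  linear_combination (-2 * τ * u ^ 2 : ℂ) * I_sq

lemma hasDerivAt_poissonDeriv (u : ℝ) (n : ℕ) {τ : ℝ} (hτ : τ ≠ 0) :
    HasDerivAt (poissonDeriv u n) (poissonDeriv u (n + 1) τ) τ := by
  have h := ((hasDerivAt_ofReal_add_mul_I_zpow u (-((n : ℤ) + 1)) hτ).add
    (hasDerivAt_ofReal_add_mul_I_zpow (-u) (-((n : ℤ) + 1)) hτ)).const_mul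
    ((-1) ^ n * n.factorial / (2 * π) : ℂ)
  refine h.congr_deriv ?_
  rw [poissonDeriv, show -((n : ℤ) + 1) - 1 = -(((n + 1 : ℕ) : ℤ) + 1) by push_cast; ring,
    Nat.factorial_succ]
  push_cast
  ring

lemma iteratedDeriv_poissonKernel1 (u : ℝ) (n : ℕ) {τ : ℝ} (hτ : 0 < τ) :
    iteratedDeriv n (fun σ => (poissonKernel1 σ u : ℂ)) τ = poissonDeriv u n τ := by
  induction n generalizing τ with
  | zero => exact ofReal_poissonKernel1 u hτ.ne'
  | succ n ih =>
    have heq : iteratedDeriv n (fun σ => (poissonKernel1 σ u : ℂ)) =ᶠ[nhds τ] poissonDeriv u n :=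
      Filter.eventually_of_mem (Ioi_mem_nhds hτ) fun σ hσ => ih hσ
    rw [iteratedDeriv_succ, heq.deriv_eq]
    exact (hasDerivAt_poissonDeriv u n hτ.ne').deriv

lemma norm_poissonDeriv_le (u : ℝ) (n : ℕ) {τ : ℝ} (hτ : 0 < τ) :
    ‖poissonDeriv u n τ‖ ≤ n.factorial * 2 ^ (n + 1) / π * (τ + |u|) ^ (-((n : ℝ) + 1)) := by
  have hpre : ‖((-1) ^ n * n.factorial / (2 * π) : ℂ)‖ = n.factorial / (2 * π) := by
    simp [abs_of_pos Real.pi_pos]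
  rw [poissonDeriv, norm_mul, hpre]
  calc n.factorial / (2 * π) * ‖((τ : ℂ) + u * I) ^ (-((n : ℤ) + 1)) +
          ((τ : ℂ) + ((-u : ℝ) : ℂ) * I) ^ (-((n : ℤ) + 1))‖
      ≤ n.factorial / (2 * π) * (2 ^ (n + 1) * (τ + |u|) ^ (-((n : ℝ) + 1)) +
          2 ^ (n + 1) * (τ + |-u|) ^ (-((n : ℝ) + 1))) := by
        gcongr
        exact (norm_add_le _ _).trans (add_le_add (norm_ofReal_add_mul_I_zpow_le u n hτ)
          (norm_ofReal_add_mul_I_zpow_le (-u) n hτ))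
    _ = n.factorial * 2 ^ (n + 1) / π * (τ + |u|) ^ (-((n : ℝ) + 1)) := by
        rw [abs_neg]
        ring

end PoissonDerivatives

lemma norm_fracDeriv_prefactor (β : ℝ) :
    ‖Complex.exp (-(Complex.I * (π : ℂ) * ((fracOrder β : ℂ) - (β : ℂ)))) /
      Complex.Gamma ((fracOrder β : ℂ) - (β : ℂ))‖ = (Real.Gamma (fracOrder β - β))⁻¹ := by
  have hΓ := Real.Gamma_pos_of_pos (sub_pos.2 (lt_fracOrder β))
  rw [show (fracOrder β : ℂ) - β = ((fracOrder β - β : ℝ) : ℂ) by push_cast; rfl,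
    Complex.Gamma_ofReal, norm_div, Complex.norm_exp, Complex.norm_real, Real.norm_of_nonneg hΓ.le]
  simp

lemma norm_fracDeriv_le {β K b t : ℝ} {F : ℝ → ℂ} (hβ : -1 < β) (hK : 0 ≤ K) (hb : 0 < b)
    (hF : ∀ s, 0 < s →
      ‖iteratedDeriv (fracOrder β) F (t + s)‖ ≤ K * (b + s) ^ (-((fracOrder β : ℝ) + 1))) :
    ‖fracDeriv β F t‖ ≤
      K * (1 / (fracOrder β - β) + 1 / (β + 1)) / Real.Gamma (fracOrder β - β) * b ^ (-β - 1) := by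
  set m := fracOrder β
  have hγ : -1 < (m : ℝ) - β - 1 := by linarith [lt_fracOrder β]
  have hγm : (m : ℝ) - β - 1 + 1 < m + 1 := by linarith
  have hpt : ∀ s ∈ Ioi (0 : ℝ), ‖iteratedDeriv m F (t + s) * ((s ^ ((m : ℝ) - β - 1) : ℝ) : ℂ)‖ ≤
      K * (s ^ ((m : ℝ) - β - 1) * max b s ^ (-((m : ℝ) + 1))) := by
    intro s hs
    have hsγ := Real.rpow_nonneg (le_of_lt hs) ((m : ℝ) - β - 1)
    have hmax : (b + s) ^ (-((m : ℝ) + 1)) ≤ max b s ^ (-((m : ℝ) + 1)) :=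
      Real.rpow_le_rpow_of_nonpos (lt_max_of_lt_left hb)
        (max_le (by linarith [mem_Ioi.1 hs]) (by linarith)) (by linarith [m.cast_nonneg (α := ℝ)])
    rw [norm_mul, Complex.norm_real, Real.norm_of_nonneg hsγ]
    calc ‖iteratedDeriv m F (t + s)‖ * s ^ ((m : ℝ) - β - 1)
        ≤ K * (b + s) ^ (-((m : ℝ) + 1)) * s ^ ((m : ℝ) - β - 1) :=
          mul_le_mul_of_nonneg_right (hF s hs) hsγ
      _ ≤ K * max b s ^ (-((m : ℝ) + 1)) * s ^ ((m : ℝ) - β - 1) := by gcongr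
      _ = _ := by ring
  have hint : ‖∫ s in Ioi 0, iteratedDeriv m F (t + s) * ((s ^ ((m : ℝ) - β - 1) : ℝ) : ℂ)‖ ≤
      K * ((1 / (m - β) + 1 / (β + 1)) * b ^ (-β - 1)) := by
    refine (norm_integral_le_of_norm_le ((integrableOn_rpow_mul_max_rpow hb hγ hγm).const_mul K)
      ((ae_restrict_iff' measurableSet_Ioi).2 (Filter.Eventually.of_forall hpt))).trans_eq ?_
    rw [integral_const_mul, integral_rpow_mul_max_rpow hb hγ hγm]
    ring_nf
  have hΓ := Real.Gamma_pos_of_pos (sub_pos.2 (lt_fracOrder β))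
  rw [fracDeriv, norm_mul, norm_fracDeriv_prefactor]
  calc (Real.Gamma (m - β))⁻¹ * _
      ≤ (Real.Gamma (m - β))⁻¹ * (K * ((1 / (m - β) + 1 / (β + 1)) * b ^ (-β - 1))) := by gcongr
    _ = _ := by ring

lemma exists_norm_fracDeriv_poissonKernel1_le {β : ℝ} (hβ : -1 < β) :
    ∃ C > 0, ∀ u t : ℝ, 0 < t →
      ‖fracDeriv β (fun τ => (poissonKernel1 τ u : ℂ)) t‖ ≤ C * (t + |u|) ^ (-β - 1) := by
  set m := fracOrder β
  have hmβ : 0 < (m : ℝ) - β := sub_pos.2 (lt_fracOrder β)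
  have hβ1 : 0 < β + 1 := by linarith
  refine ⟨m.factorial * 2 ^ (m + 1) / π * (1 / (m - β) + 1 / (β + 1)) / Real.Gamma (m - β),
    by have := Real.Gamma_pos_of_pos hmβ; positivity, fun u t ht => ?_⟩
  refine norm_fracDeriv_le hβ (by positivity) (by positivity) fun s hs => ?_
  rw [iteratedDeriv_poissonKernel1 u m (by positivity), add_right_comm]
  exact norm_poissonDeriv_le u m (by positivity)

/-- `∫_{Γ₊(x)} |t^β F(y, t)|² dy dt / t²`. -/
noncomputable def coneSquareIntegral (β x : ℝ) (F : ℝ → ℝ → ℂ) : ℝ :=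
  ∫ t in Ioi 0, ∫ y in Ioi 0, if |x - y| < t then ‖((t ^ β : ℝ) : ℂ) * F y t‖ ^ 2 / t ^ 2 else 0

lemma integral_Ioi_ite_abs_sub_lt_le {x t M : ℝ} {g : ℝ → ℝ} (ht : 0 ≤ t) (hM : 0 ≤ M)
    (hg : ∀ y, 0 ≤ g y) (hgM : ∀ y, |x - y| < t → g y ≤ M) :
    ∫ y in Ioi 0, (if |x - y| < t then g y else 0) ≤ 2 * t * M := by
  have hind : Integrable ((Ioo (x - t) (x + t)).indicator fun _ => M) :=
    (integrableOn_const (by simp)).integrable_indicator measurableSet_Ioo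
  have hind0 : 0 ≤ (Ioo (x - t) (x + t)).indicator fun _ => M := indicator_nonneg fun _ _ => hM
  calc ∫ y in Ioi 0, (if |x - y| < t then g y else 0)
      ≤ ∫ y in Ioi 0, (Ioo (x - t) (x + t)).indicator (fun _ => M) y := by
        refine integral_mono_of_nonneg (Filter.Eventually.of_forall fun y => ?_) hind.integrableOn
          (Filter.Eventually.of_forall fun y => ?_)
        · dsimp only
          split_ifs <;> simp [hg]
        · dsimp only
          split_ifs with hxy
          · rw [indicator_of_mem (by constructor <;> linarith [abs_sub_lt_iff.1 hxy])]
            exact hgM y hxy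
          · exact hind0 y
    _ ≤ ∫ y, (Ioo (x - t) (x + t)).indicator (fun _ => M) y :=
        setIntegral_le_integral hind (Filter.Eventually.of_forall hind0)
    _ = 2 * t * M := by
        rw [integral_indicator_const _ measurableSet_Ioo, volume_real_Ioo_of_le (by linarith),
          smul_eq_mul]
        ring

lemma norm_cone_integrand_le {β t C M : ℝ} {w : ℂ} (ht : 0 < t) (hM : 0 < M)
    (hw : ‖w‖ ≤ C * M ^ (-β - 1)) :
    ‖((t ^ β : ℝ) : ℂ) * w‖ ^ 2 / t ^ 2 ≤ C ^ 2 * (t ^ (2 * β - 2) * M ^ (-(2 * β + 2))) := by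
  rw [norm_mul, Complex.norm_real, Real.norm_of_nonneg (Real.rpow_nonneg ht.le β)]
  calc (t ^ β * ‖w‖) ^ 2 / t ^ 2 ≤ (t ^ β * (C * M ^ (-β - 1))) ^ 2 / t ^ 2 := by gcongr
    _ = C ^ 2 * (t ^ (2 * β - 2) * M ^ (-(2 * β + 2))) := by
      rw [show 2 * β - 2 = β * (2 : ℕ) - (2 : ℕ) by push_cast; ring,
        Real.rpow_sub_natCast ht.ne', Real.rpow_mul_natCast ht.le,
        show -(2 * β + 2) = (-β - 1) * (2 : ℕ) by push_cast; ring, Real.rpow_mul_natCast hM.le]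
      ring

lemma coneSquareIntegral_le {β x a C : ℝ} {F : ℝ → ℝ → ℂ} (hβ : 0 < β) (ha : 0 < a)
    (hF : ∀ y t, 0 < t → |x - y| < t → ‖F y t‖ ≤ C * max a t ^ (-β - 1)) :
    coneSquareIntegral β x F ≤ C ^ 2 * (1 / β + 1) / a ^ 2 := by
  have hγ : -1 < 2 * β - 1 := by linarith
  have hγδ : 2 * β - 1 + 1 < 2 * β + 2 := by linarith
  have hinner : ∀ t ∈ Ioi (0 : ℝ), ∫ y in Ioi 0,
      (if |x - y| < t then ‖((t ^ β : ℝ) : ℂ) * F y t‖ ^ 2 / t ^ 2 else 0) ≤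
        2 * C ^ 2 * (t ^ (2 * β - 1) * max a t ^ (-(2 * β + 2))) := by
    intro t (ht : 0 < t)
    have hM : 0 < max a t := lt_max_of_lt_left ha
    refine (integral_Ioi_ite_abs_sub_lt_le (le_of_lt ht) (by positivity) (fun y => by positivity)
      fun y hxy => norm_cone_integrand_le ht hM (hF y t ht hxy)).trans_eq ?_
    rw [show 2 * β - 1 = 2 * β - 2 + 1 by ring, Real.rpow_add_one (ne_of_gt ht)]
    ring
  calc coneSquareIntegral β x F
      ≤ ∫ t in Ioi 0, 2 * C ^ 2 * (t ^ (2 * β - 1) * max a t ^ (-(2 * β + 2))) := by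
        refine integral_mono_of_nonneg (Filter.Eventually.of_forall fun t => ?_)
          ((integrableOn_rpow_mul_max_rpow ha hγ hγδ).const_mul _)
          ((ae_restrict_iff' measurableSet_Ioi).2 (Filter.Eventually.of_forall hinner))
        exact integral_nonneg fun y => by dsimp only; split_ifs <;> positivity
    _ = C ^ 2 * (1 / β + 1) / a ^ 2 := by
        rw [integral_const_mul, integral_rpow_mul_max_rpow ha hγ hγδ,
          show 2 * β - 1 + 1 - (2 * β + 2) = -((2 : ℕ) : ℝ) by push_cast; ring,
          Real.rpow_neg ha.le, Real.rpow_natCast]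
        field_simp
        ring

lemma sqrt_coneSquareIntegral_le {β x a C : ℝ} {F : ℝ → ℝ → ℂ} (hβ : 0 < β) (ha : 0 < a)
    (hC : 0 ≤ C) (hF : ∀ y t, 0 < t → |x - y| < t → ‖F y t‖ ≤ C * max a t ^ (-β - 1)) :
    √(coneSquareIntegral β x F) ≤ C * √(1 / β + 1) / a := by
  calc √(coneSquareIntegral β x F) ≤ √(C ^ 2 * (1 / β + 1) / a ^ 2) :=
        Real.sqrt_le_sqrt (coneSquareIntegral_le hβ ha hF)
    _ = C * √(1 / β + 1) / a := by
        rw [Real.sqrt_div' _ (by positivity), Real.sqrt_mul' _ (by positivity), Real.sqrt_sq hC,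
          Real.sqrt_sq ha.le]

/-- cone-square estimates for the translated/reflected 1D Poisson kernel:
`‖t^β ∂_t^β P_t(y+z)‖_{L²(Γ₊(x), dy dt/t²)} ≤ C/(x+z)` and
`‖t^β ∂_t^β P_t(y−z)‖_{L²(Γ₊(x), dy dt/t²)} ≤ C/|x−z|`. -/
theorem statement14 (β : ℝ) (hβ : 0 < β) :
    ∃ C > (0 : ℝ),
      (∀ x z : ℝ, 0 < x → 0 < z →
        Real.sqrt (∫ t in Set.Ioi (0 : ℝ), ∫ y in Set.Ioi (0 : ℝ),
            (if |x - y| < t then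
                ‖((t ^ β : ℝ) : ℂ) *
                    fracDeriv β (fun τ => (poissonKernel1 τ (y + z) : ℂ)) t‖ ^ 2 / t ^ 2
              else 0))
          ≤ C / (x + z)) ∧
      (∀ x z : ℝ, 0 < x → 0 < z → x ≠ z →
        Real.sqrt (∫ t in Set.Ioi (0 : ℝ), ∫ y in Set.Ioi (0 : ℝ),
            (if |x - y| < t then
                ‖((t ^ β : ℝ) : ℂ) *
                    fracDeriv β (fun τ => (poissonKernel1 τ (y - z) : ℂ)) t‖ ^ 2 / t ^ 2
              else 0))
          ≤ C / |x - z|) := by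
  obtain ⟨C, hC, hfrac⟩ := exists_norm_fracDeriv_poissonKernel1_le (by linarith : -1 < β)
  have hcone : ∀ {x a : ℝ} (u : ℝ → ℝ), 0 < a → (∀ y t, |x - y| < t → a ≤ t + |u y|) →
      √(coneSquareIntegral β x fun y t => fracDeriv β (fun τ => (poissonKernel1 τ (u y) : ℂ)) t)
        ≤ C * √(1 / β + 1) / a := fun u ha hu =>
    sqrt_coneSquareIntegral_le hβ ha hC.le fun y t ht hxy => (hfrac (u y) t ht).trans <|
      mul_le_mul_of_nonneg_left (Real.rpow_le_rpow_of_nonpos (lt_max_of_lt_right ht)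
        (max_le (hu y t hxy) (le_add_of_nonneg_right (abs_nonneg _))) (by linarith)) hC.le
  refine ⟨C * √(1 / β + 1), by positivity,
    fun x z hx hz => hcone (fun y => y + z) (by positivity) fun y t hxy => ?_,
    fun x z _ _ hxz => hcone (fun y => y - z) (abs_pos.2 (sub_ne_zero.2 hxz)) fun y t hxy => ?_⟩
  · linarith [(abs_sub_lt_iff.1 hxy).1, le_abs_self (y + z)]
  · linarith [abs_sub_le x y z]
end
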